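/- arXiv:1705.02548 — 3 statements merged into one kernel-verified Lean document; each statement's English description precedes it below -/
import Mathlib

section
/- Let p ∈ [1,∞) and let φ be a nonnegative locally integrable function on (0,∞) such that H_φ is bounded on L^p(ℝ) with operator norm at most C. Then ∫₀^∞ φ(t) t^{-(1-1/p)} dt ≤ C. -/
/-!
Test `H_φ` against `f_N(y) = y^{-1/p} 𝟙_{[1,N]}(y)`, for which `‖f_N‖_p^p = log N`. For `x > 0`,
`H_φ f_N(x) = x^{-1/p} ∫_{x/N}^{x} t^{1/p-1} φ(t) dt`, so on `[b, N a]` it is at least `x^{-1/p} J`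
with `J = ∫_a^b t^{1/p-1} φ(t) dt`. Integrating `J^p x⁻¹` over `[b, N a]` gives
`J^p log (N a / b) ≤ C^p log N`, and `N → ∞` yields `J ≤ C`; exhausting `(0, ∞)` by such `[a, b]`
concludes. Truncating at `N` (rather than the `ε`-perturbed exponent of the paper) keeps every
integral over a compact subset of `(0, ∞)`, where `φ` is integrable.
-/

open MeasureTheory Set Filter Topology
open scoped ENNReal NNReal

lemma lintegral_rpow_enorm_le_of_eLpNorm_le {α E F : Type*} [MeasurableSpace α] {μ : Measure α}
    [ENorm E] [ENorm F] {p : ℝ} (hp : 0 < p) {g : α → E} {f : α → F} {c : ℝ≥0∞}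
    (h : eLpNorm g (ENNReal.ofReal p) μ ≤ c * eLpNorm f (ENNReal.ofReal p) μ) :
    ∫⁻ x, ‖g x‖ₑ ^ p ∂μ ≤ c ^ p * ∫⁻ x, ‖f x‖ₑ ^ p ∂μ := by
  simp only [eLpNorm_eq_lintegral_rpow_enorm_toReal (ENNReal.ofReal_pos.2 hp).ne'
    ENNReal.ofReal_ne_top, ENNReal.toReal_ofReal hp.le] at h
  rwa [← ENNReal.rpow_le_rpow_iff (one_div_pos.2 hp),
    ENNReal.mul_rpow_of_nonneg _ _ (by positivity), ← ENNReal.rpow_mul, mul_one_div_cancel hp.ne', ENNReal.rpow_one]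

lemma lintegral_Icc_inv {b c : ℝ} (hb : 0 < b) (hbc : b ≤ c) :
    ∫⁻ x in Icc b c, ENNReal.ofReal x⁻¹ = ENNReal.ofReal (Real.log (c / b)) := by
  have hpos : ∀ x ∈ Icc b c, 0 < x := fun x hx => hb.trans_le hx.1
  rw [← ofReal_integral_eq_lintegral_ofReal
      ((continuousOn_inv₀.mono fun x hx => (hpos x hx).ne').integrableOn_Icc)
      (ae_restrict_of_forall_mem measurableSet_Icc fun x hx => (inv_pos.2 (hpos x hx)).le),
    integral_Icc_eq_integral_Ioc, ← intervalIntegral.integral_of_le hbc,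
    integral_inv_of_pos hb (hb.trans_le hbc)]

lemma setLIntegral_Ioi_zero_le_of_forall_Icc {g : ℝ → ℝ≥0∞} {c : ℝ≥0∞}
    (h : ∀ a b, 0 < a → 0 < b → ∫⁻ t in Icc a b, g t ≤ c) : ∫⁻ t in Ioi 0, g t ≤ c := by
  have hcover : Ioi (0:ℝ) = ⋃ n : ℕ, Icc ((n:ℝ) + 1)⁻¹ (n + 1) := by
    ext t
    simp only [mem_Ioi, mem_iUnion, mem_Icc]
    constructor
    · intro ht
      obtain ⟨n, hn⟩ := exists_nat_gt (max t t⁻¹)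
      refine ⟨n, inv_le_of_inv_le₀ ht ?_, ?_⟩ <;>
        linarith [le_max_left t t⁻¹, le_max_right t t⁻¹]
    · rintro ⟨n, hn, -⟩
      exact lt_of_lt_of_le (by positivity) hn
  have hmono : Monotone fun n : ℕ => Icc ((n:ℝ) + 1)⁻¹ (n + 1) :=
    fun m n hmn => Icc_subset_Icc (by gcongr) (by gcongr)
  rw [← withDensity_apply _ measurableSet_Ioi, hcover, hmono.measure_iUnion]
  exact iSup_le fun n =>
    (withDensity_apply _ measurableSet_Icc).trans_le (h _ _ (by positivity) (by positivity))

lemma le_of_eventually_mul_log_le {A B r : ℝ} (hr : 0 < r)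
    (h : ∀ᶠ N in atTop, A * Real.log (N * r) ≤ B * Real.log N) : A ≤ B := by
  have hlim : Tendsto (fun N => A * (1 + Real.log r * (Real.log N)⁻¹)) atTop (𝓝 A) := by
    simpa using
      ((Real.tendsto_log_atTop.inv_tendsto_atTop.const_mul (Real.log r)).const_add 1).const_mul A
  refine le_of_tendsto hlim ?_
  filter_upwards [h, eventually_gt_atTop 1] with N hN hN1
  have hlog : 0 < Real.log N := Real.log_pos hN1
  rw [Real.log_mul (by positivity) hr.ne'] at hN
  calc A * (1 + Real.log r * (Real.log N)⁻¹) = A * (Real.log N + Real.log r) / Real.log N := by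
        field_simp
    _ ≤ B := by rwa [div_le_iff₀ hlog]

noncomputable def hausdorffOperator (φ : ℝ → ℝ) (f : ℝ → ℂ) (x : ℝ) : ℂ :=
  ∫ t in Ioi (0:ℝ), f (x / t) * ((φ t / t : ℝ) : ℂ)

noncomputable def truncatedPower (s N : ℝ) (y : ℝ) : ℂ :=
  ((Icc 1 N).indicator (fun y => y ^ (-s)) y : ℝ)

section HausdorffOperator

variable {φ : ℝ → ℝ} {p a b N : ℝ}

lemma div_mem_Icc_one_iff {x t : ℝ} (ht : 0 < t) (hN : 0 < N) :
    x / t ∈ Icc 1 N ↔ t ∈ Icc (x / N) x := by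
  rw [mem_Icc, mem_Icc, le_div_iff₀ ht, div_le_iff₀ ht, div_le_iff₀ hN, one_mul, mul_comm t N]
  exact and_comm

lemma hausdorffOperator_truncatedPower (φ : ℝ → ℝ) (s : ℝ) {x : ℝ} (hN : 0 < N) (hx : 0 < x) :
    hausdorffOperator φ (truncatedPower s N) x
      = ((x ^ (-s) * ∫ t in Icc (x / N) x, t ^ (s - 1) * φ t : ℝ) : ℂ) := by
  have hIcc : Icc (x / N) x ⊆ Ioi 0 := fun t ht => (div_pos hx hN).trans_le ht.1
  have hpointwise : ∀ t ∈ Ioi (0:ℝ), truncatedPower s N (x / t) * ((φ t / t : ℝ) : ℂ)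
      = ((Icc (x / N) x).indicator (fun t => x ^ (-s) * (t ^ (s - 1) * φ t)) t : ℝ) := by
    intro t (ht : 0 < t)
    rw [truncatedPower, ← Complex.ofReal_mul]
    by_cases hmem : t ∈ Icc (x / N) x
    · rw [indicator_of_mem ((div_mem_Icc_one_iff ht hN).2 hmem), indicator_of_mem hmem,
        Real.div_rpow hx.le ht.le, Real.rpow_neg ht.le, Real.rpow_sub_one ht.ne']
      push_cast
      field_simp
    · rw [indicator_of_notMem (mt (div_mem_Icc_one_iff ht hN).1 hmem), indicator_of_notMem hmem,
        zero_mul]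
  rw [hausdorffOperator, setIntegral_congr_fun measurableSet_Ioi hpointwise,
    integral_complex_ofReal, setIntegral_indicator measurableSet_Icc, inter_eq_right.2 hIcc,
    integral_const_mul]

lemma integrableOn_Icc_rpow_mul (hloc : LocallyIntegrableOn φ (Ioi 0)) (ha : 0 < a) (c : ℝ) :
    IntegrableOn (fun t => t ^ c * φ t) (Icc a b) := by
  have hpos : ∀ t ∈ Icc a b, 0 < t := fun t ht => ha.trans_le ht.1
  refine IntegrableOn.continuousOn_mul (fun t ht => ?_)
    (hloc.integrableOn_compact_subset hpos isCompact_Icc) isCompact_Icc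
  exact (Real.continuousAt_rpow_const t c (Or.inl (hpos t ht).ne')).continuousWithinAt

lemma rpow_mul_nonneg_of_mem_Icc (hφ : ∀ t ∈ Ioi (0:ℝ), 0 ≤ φ t) (ha : 0 < a) (c : ℝ) :
    ∀ t ∈ Icc a b, 0 ≤ t ^ c * φ t := fun t ht =>
  mul_nonneg (Real.rpow_nonneg (ha.trans_le ht.1).le c) (hφ t (ha.trans_le ht.1))

lemma setIntegral_Icc_rpow_mul_nonneg (hφ : ∀ t ∈ Ioi (0:ℝ), 0 ≤ φ t) (ha : 0 < a) (c : ℝ) :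
    0 ≤ ∫ t in Icc a b, t ^ c * φ t :=
  setIntegral_nonneg measurableSet_Icc (rpow_mul_nonneg_of_mem_Icc hφ ha c)

lemma rpow_mul_setIntegral_le_norm_hausdorffOperator (hφ : ∀ t ∈ Ioi (0:ℝ), 0 ≤ φ t)
    (hloc : LocallyIntegrableOn φ (Ioi 0)) (s : ℝ) {x : ℝ} (hN : 0 < N) (hx : 0 < x)
    (hbx : b ≤ x) (hxa : x ≤ N * a) :
    x ^ (-s) * ∫ t in Icc a b, t ^ (s - 1) * φ t
      ≤ ‖hausdorffOperator φ (truncatedPower s N) x‖ := by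
  have hxN : 0 < x / N := div_pos hx hN
  rw [hausdorffOperator_truncatedPower φ s hN hx, Complex.norm_real, Real.norm_eq_abs]
  refine le_trans ?_ (le_abs_self _)
  gcongr
  case hf =>
    exact ae_restrict_of_forall_mem measurableSet_Icc (rpow_mul_nonneg_of_mem_Icc hφ hxN _)
  case hfi => exact integrableOn_Icc_rpow_mul hloc hxN _
  case ha => rw [div_le_iff₀ hN]; linarith

lemma lintegral_enorm_truncatedPower_rpow (hp : 0 < p) (hN : 1 ≤ N) :
    ∫⁻ y, ‖truncatedPower (1 / p) N y‖ₑ ^ p = ENNReal.ofReal (Real.log N) := by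
  have hpointwise : ∀ y, ‖truncatedPower (1 / p) N y‖ₑ ^ p
      = (Icc 1 N).indicator (fun y => ENNReal.ofReal y⁻¹) y := by
    intro y
    by_cases hy : y ∈ Icc 1 N
    · have hy0 : 0 < y := one_pos.trans_le hy.1
      rw [truncatedPower, indicator_of_mem hy, indicator_of_mem hy, ← ofReal_norm,
        Complex.norm_real, Real.norm_of_nonneg (by positivity),
        ENNReal.ofReal_rpow_of_nonneg (by positivity) hp.le, ← Real.rpow_mul hy0.le,
        neg_mul, one_div_mul_cancel hp.ne', Real.rpow_neg_one]
    · rw [truncatedPower, indicator_of_notMem hy, indicator_of_notMem hy, Complex.ofReal_zero,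
        enorm_zero, ENNReal.zero_rpow_of_pos hp]
  simp only [hpointwise]
  rw [lintegral_indicator measurableSet_Icc, lintegral_Icc_inv one_pos hN, div_one]

lemma memLp_truncatedPower (hp : 0 < p) (hN : 1 ≤ N) :
    MemLp (truncatedPower (1 / p) N) (ENNReal.ofReal p) := by
  refine ⟨?_, ?_⟩
  · exact (Complex.measurable_ofReal.comp
      ((measurable_id.pow_const _).indicator measurableSet_Icc)).aestronglyMeasurable
  · rw [eLpNorm_eq_lintegral_rpow_enorm_toReal (ENNReal.ofReal_pos.2 hp).ne' ENNReal.ofReal_ne_top,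
      ENNReal.toReal_ofReal hp.le, lintegral_enorm_truncatedPower_rpow hp hN]
    exact ENNReal.rpow_lt_top_of_nonneg (by positivity) ENNReal.ofReal_ne_top

lemma ofReal_mul_log_le_lintegral_enorm_hausdorffOperator (hφ : ∀ t ∈ Ioi (0:ℝ), 0 ≤ φ t)
    (hloc : LocallyIntegrableOn φ (Ioi 0)) (hp : 0 < p) (ha : 0 < a) (hb : 0 < b) (hN : 0 < N)
    (hbN : b ≤ N * a) :
    ENNReal.ofReal ((∫ t in Icc a b, t ^ (1 / p - 1) * φ t) ^ p)
        * ENNReal.ofReal (Real.log (N * a / b))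
      ≤ ∫⁻ x, ‖hausdorffOperator φ (truncatedPower (1 / p) N) x‖ₑ ^ p := by
  set J := ∫ t in Icc a b, t ^ (1 / p - 1) * φ t
  have hJ : 0 ≤ J := setIntegral_Icc_rpow_mul_nonneg hφ ha _
  calc ENNReal.ofReal (J ^ p) * ENNReal.ofReal (Real.log (N * a / b))
      = ∫⁻ x in Icc b (N * a), ENNReal.ofReal ((x ^ (-(1 / p)) * J) ^ p) := by
        rw [← lintegral_Icc_inv hb hbN, ← lintegral_const_mul' _ _ ENNReal.ofReal_ne_top]
        refine setLIntegral_congr_fun measurableSet_Icc fun x hx => ?_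
        have hx0 : 0 < x := hb.trans_le hx.1
        rw [← ENNReal.ofReal_mul (by positivity), Real.mul_rpow (by positivity) hJ,
          ← Real.rpow_mul hx0.le, neg_mul, one_div_mul_cancel hp.ne', Real.rpow_neg_one, mul_comm]
    _ ≤ ∫⁻ x in Icc b (N * a), ‖hausdorffOperator φ (truncatedPower (1 / p) N) x‖ₑ ^ p := by
        refine setLIntegral_mono' measurableSet_Icc fun x hx => ?_
        have hx0 : 0 < x := hb.trans_le hx.1
        rw [← ofReal_norm, ENNReal.ofReal_rpow_of_nonneg (norm_nonneg _) hp.le]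
        gcongr
        exact rpow_mul_setIntegral_le_norm_hausdorffOperator hφ hloc _ hN hx0 hx.1 hx.2
    _ ≤ _ := setLIntegral_le_lintegral _ _

lemma rpow_setIntegral_mul_log_le (hφ : ∀ t ∈ Ioi (0:ℝ), 0 ≤ φ t)
    (hloc : LocallyIntegrableOn φ (Ioi 0)) (hp : 0 < p) {C : ℝ≥0}
    (hbd : ∀ f : ℝ → ℂ, MemLp f (ENNReal.ofReal p) →
      eLpNorm (hausdorffOperator φ f) (ENNReal.ofReal p) volume
        ≤ C * eLpNorm f (ENNReal.ofReal p) volume)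
    (ha : 0 < a) (hb : 0 < b) (hN : 1 ≤ N) (hbN : b ≤ N * a) :
    (∫ t in Icc a b, t ^ (1 / p - 1) * φ t) ^ p * Real.log (N * a / b)
      ≤ (C : ℝ) ^ p * Real.log N := by
  have h := (ofReal_mul_log_le_lintegral_enorm_hausdorffOperator hφ hloc hp ha hb
    (one_pos.trans_le hN) hbN).trans
    (lintegral_rpow_enorm_le_of_eLpNorm_le hp (hbd _ (memLp_truncatedPower hp hN)))
  rwa [lintegral_enorm_truncatedPower_rpow hp hN, ← ENNReal.coe_rpow_of_nonneg _ hp.le,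
    ← ENNReal.ofReal_coe_nnreal, NNReal.coe_rpow,
    ← ENNReal.ofReal_mul (Real.rpow_nonneg (setIntegral_Icc_rpow_mul_nonneg hφ ha _) p),
    ← ENNReal.ofReal_mul (by positivity),
    ENNReal.ofReal_le_ofReal_iff (mul_nonneg (by positivity) (Real.log_nonneg hN))] at h

lemma setIntegral_Icc_rpow_mul_le (hφ : ∀ t ∈ Ioi (0:ℝ), 0 ≤ φ t)
    (hloc : LocallyIntegrableOn φ (Ioi 0)) (hp : 0 < p) {C : ℝ≥0}
    (hbd : ∀ f : ℝ → ℂ, MemLp f (ENNReal.ofReal p) →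
      eLpNorm (hausdorffOperator φ f) (ENNReal.ofReal p) volume
        ≤ C * eLpNorm f (ENNReal.ofReal p) volume)
    (ha : 0 < a) (hb : 0 < b) :
    ∫ t in Icc a b, t ^ (1 / p - 1) * φ t ≤ C := by
  refine (Real.rpow_le_rpow_iff (setIntegral_Icc_rpow_mul_nonneg hφ ha _) C.coe_nonneg hp).1 ?_
  refine le_of_eventually_mul_log_le (div_pos ha hb) ?_
  filter_upwards [eventually_ge_atTop (max 1 (b / a))] with N hN
  rw [← mul_div_assoc]
  refine rpow_setIntegral_mul_log_le hφ hloc hp hbd ha hb (le_of_max_le_left hN) ?_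
  rw [← div_le_iff₀ ha]
  exact le_of_max_le_right hN

end HausdorffOperator

theorem hausdorff_Lp_necessary_general (p : ℝ) (hp : 1 ≤ p) (φ : ℝ → ℝ)
    (hφ : ∀ t ∈ Ioi (0:ℝ), 0 ≤ φ t)
    (hloc : LocallyIntegrableOn φ (Ioi 0)) (C : ℝ)
    (hbd : ∀ f : ℝ → ℂ, MemLp f (ENNReal.ofReal p) →
      eLpNorm (fun x : ℝ => ∫ t in Ioi (0:ℝ), f (x / t) * ((φ t / t : ℝ) : ℂ))
          (ENNReal.ofReal p) volume ≤
        ENNReal.ofReal C * eLpNorm f (ENNReal.ofReal p) volume) :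
    (∫⁻ t in Ioi (0:ℝ), ENNReal.ofReal (φ t / t ^ (1 - 1 / p))) ≤ ENNReal.ofReal C := by
  have hp0 : 0 < p := by linarith
  refine setLIntegral_Ioi_zero_le_of_forall_Icc fun a b ha hb => ?_
  calc ∫⁻ t in Icc a b, ENNReal.ofReal (φ t / t ^ (1 - 1 / p))
      = ENNReal.ofReal (∫ t in Icc a b, t ^ (1 / p - 1) * φ t) := by
        rw [ofReal_integral_eq_lintegral_ofReal (integrableOn_Icc_rpow_mul hloc ha _)
          (ae_restrict_of_forall_mem measurableSet_Icc (rpow_mul_nonneg_of_mem_Icc hφ ha _))]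
        refine setLIntegral_congr_fun measurableSet_Icc fun t ht => ?_
        rw [div_eq_mul_inv, mul_comm, ← Real.rpow_neg (ha.trans_le ht.1).le, neg_sub]
    _ ≤ ENNReal.ofReal C :=
        (ENNReal.ofReal_le_ofReal (setIntegral_Icc_rpow_mul_le hφ hloc hp0 (C := C.toNNReal) hbd
          ha hb)).trans_eq ENNReal.ofReal_coe_nnreal

/-- If p ∈ [1,∞), φ ≥ 0 is locally integrable on (0,∞) and H_φ is bounded on
L^p(ℝ) with operator norm at most C, then ∫₀^∞ φ(t) t^{-(1-1/p)} dt ≤ C. -/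
theorem hausdorff_Lp_necessary (p : ℝ) (hp : 1 ≤ p) (φ : ℝ → ℝ)
    (hφ : ∀ t ∈ Ioi (0:ℝ), 0 ≤ φ t)
    (hloc : LocallyIntegrableOn φ (Ioi 0)) (C : ℝ) (hC : 0 ≤ C)
    (hbd : ∀ f : ℝ → ℂ, MemLp f (ENNReal.ofReal p) →
      eLpNorm (fun x : ℝ => ∫ t in Ioi (0:ℝ), f (x / t) * ((φ t / t : ℝ) : ℂ))
          (ENNReal.ofReal p) volume ≤
        ENNReal.ofReal C * eLpNorm f (ENNReal.ofReal p) volume) :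
    (∫⁻ t in Ioi (0:ℝ), ENNReal.ofReal (φ t / t ^ (1 - 1 / p))) ≤ ENNReal.ofReal C :=
  hausdorff_Lp_necessary_general p hp φ hφ hloc C hbd
end

section
/- Let p ∈ [1,∞) and let φ be a nonnegative locally integrable function on (0,∞). Then H_φ is bounded on L^p(ℝ) if and only if ∫₀^∞ φ(t) t^{-(1-1/p)} dt < ∞, and in that case the operator norm of H_φ on L^p(ℝ) equals ∫₀^∞ φ(t) t^{-(1-1/p)} dt. -/
/-!
Upper bound: Hölder's inequality for the measure `φ(t)/t dt`, with the weight `t^(1/p)` split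
between the two factors, followed by Tonelli and `∫ |f(x/t)|^p dx = t ‖f‖_p^p`, gives
`‖H_φ f‖_p ≤ (∫₀^∞ φ(t) t^(1/p-1) dt) ‖f‖_p`.

Lower bound: for `f = x^(-1/p)` on `(1, N)` one has `‖f‖_p^p = log N`, while for `0 < δ < b`
and `x ∈ (b, Nδ)`, `H_φ f(x) ≥ x^(-1/p) ∫_δ^b φ(t) t^(1/p-1) dt`; since `∫_b^{Nδ} dx/x =
log N - log(b/δ)`, an admissible constant `C` satisfies `∫_δ^b φ(t) t^(1/p-1) dt ≤ C` after
letting `N → ∞`, and exhausting `(0, ∞)` by such intervals bounds the whole integral by `C`.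
-/

open MeasureTheory Set Filter Topology
open scoped ENNReal

noncomputable def hausdorffOp (φ : ℝ → ℝ) (f : ℝ → ℂ) (x : ℝ) : ℂ :=
  ∫ t in Ioi (0 : ℝ), f (x / t) * ((φ t / t : ℝ) : ℂ)

def HausdorffLpBound (p : ℝ) (φ : ℝ → ℝ) (C : ℝ) : Prop :=
  ∀ f : ℝ → ℂ, MemLp f (ENNReal.ofReal p) →
    eLpNorm (hausdorffOp φ f) (ENNReal.ofReal p) volume ≤
      ENNReal.ofReal C * eLpNorm f (ENNReal.ofReal p) volume

noncomputable def truncRpow (s N : ℝ) (y : ℝ) : ℂ :=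
  ((Ioo 1 N).indicator (fun y => y ^ (-s)) y : ℝ)

open Classical in
theorem AEMeasurable.exists_measurable_ge_ae_eq {α : Type*} [MeasurableSpace α] {μ : Measure α}
    {g : α → ℝ≥0∞} (hg : AEMeasurable g μ) :
    ∃ g' : α → ℝ≥0∞, Measurable g' ∧ g ≤ g' ∧ g' =ᵐ[μ] g := by
  set N := toMeasurable μ {x | g x ≠ hg.mk g x}
  have hN : ∀ᵐ x ∂μ, x ∉ N := by
    rw [← measure_eq_zero_iff_ae_notMem, measure_toMeasurable]
    exact ae_iff.mp hg.ae_eq_mk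
  have hgN : ∀ x ∉ N, g x = hg.mk g x := fun x hx =>
    not_not.mp (mt (subset_toMeasurable _ _ ·) hx)
  refine ⟨N.piecewise ⊤ (hg.mk g),
    measurable_const.piecewise (measurableSet_toMeasurable _ _) hg.measurable_mk, fun x => ?_, ?_⟩
  · by_cases hx : x ∈ N
    · simp [hx]
    · rw [piecewise_eq_of_notMem _ _ _ hx, hgN x hx]
  · filter_upwards [hN] with x hx
    rw [piecewise_eq_of_notMem _ _ _ hx, hgN x hx]

theorem ENNReal.lintegral_mul_rpow_le_weighted {α : Type*} [MeasurableSpace α] {μ : Measure α}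
    {p : ℝ} (hp : 1 ≤ p) {F w s : α → ℝ≥0∞} (hF : AEMeasurable F μ) (hw : AEMeasurable w μ)
    (hs : AEMeasurable s μ) (hs0 : ∀ᵐ a ∂μ, s a ≠ 0) (hstop : ∀ᵐ a ∂μ, s a ≠ ⊤) :
    (∫⁻ a, F a * w a ∂μ) ^ p ≤
      (∫⁻ a, F a ^ p * s a ^ (1 - p) * w a ∂μ) * (∫⁻ a, s a * w a ∂μ) ^ (p - 1) := by
  rcases hp.eq_or_lt with rfl | hp1
  · simp
  set q := p.conjExponent
  have hpq : p.HolderConjugate q := .conjExponent hp1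
  have hq : 1 / q = 1 - 1 / p := by rw [one_div, one_div]; linarith [hpq.inv_add_inv_eq_one]
  have hp0 : 0 < p := by linarith
  have hq0 : 0 < q := hpq.symm.pos
  set A : α → ℝ≥0∞ := fun a => F a * w a ^ (1 / p) * s a ^ (-(1 / q))
  set B : α → ℝ≥0∞ := fun a => (s a * w a) ^ (1 / q)
  have hAB : ∀ᵐ a ∂μ, F a * w a = A a * B a := by
    filter_upwards [hs0, hstop] with a h0 htop
    calc F a * w a
        = F a * (w a ^ (1 / p) * w a ^ (1 / q)) * (s a ^ (-(1 / q)) * s a ^ (1 / q)) := by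
          rw [← ENNReal.rpow_add_of_nonneg _ _ (by positivity) (by positivity),
            ← ENNReal.rpow_add _ _ h0 htop, hq, neg_add_cancel, ENNReal.rpow_zero, mul_one,
            add_sub_cancel, ENNReal.rpow_one]
      _ = A a * B a := by
          simp only [A, B, ENNReal.mul_rpow_of_nonneg _ _ (one_div_pos.mpr hq0).le]
          ring
  have hA : ∀ a, A a ^ p = F a ^ p * s a ^ (1 - p) * w a := fun a => by
    simp only [A, ENNReal.mul_rpow_of_nonneg _ _ hp0.le, ← ENNReal.rpow_mul]
    rw [one_div_mul_cancel hp0.ne', ENNReal.rpow_one, hq]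
    field_simp
    ring_nf
  have hB : ∀ a, B a ^ q = s a * w a := fun a => by
    rw [← ENNReal.rpow_mul, one_div_mul_cancel hq0.ne', ENNReal.rpow_one]
  calc (∫⁻ a, F a * w a ∂μ) ^ p = (∫⁻ a, A a * B a ∂μ) ^ p := by rw [lintegral_congr_ae hAB]
    _ ≤ ((∫⁻ a, A a ^ p ∂μ) ^ (1 / p) * (∫⁻ a, B a ^ q ∂μ) ^ (1 / q)) ^ p :=
        ENNReal.rpow_le_rpow
          (ENNReal.lintegral_mul_le_Lp_mul_Lq μ hpq (by fun_prop) (by fun_prop)) hp0.le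
    _ = (∫⁻ a, A a ^ p ∂μ) * (∫⁻ a, B a ^ q ∂μ) ^ (p - 1) := by
        rw [ENNReal.mul_rpow_of_nonneg _ _ hp0.le, ← ENNReal.rpow_mul, ← ENNReal.rpow_mul,
          one_div_mul_cancel hp0.ne', ENNReal.rpow_one, hq]
        congr 2
        field_simp
    _ = _ := by simp only [hA, hB]

theorem lintegral_comp_div_const {G : ℝ → ℝ≥0∞} (hG : Measurable G) {t : ℝ} (ht : 0 < t) :
    ∫⁻ x, G (x / t) = ENNReal.ofReal t * ∫⁻ x, G x := by
  simp_rw [div_eq_mul_inv]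
  rw [← lintegral_map hG (measurable_mul_const t⁻¹),
    Real.map_volume_mul_right (inv_ne_zero ht.ne'), lintegral_smul_measure, inv_inv,
    abs_of_pos ht, smul_eq_mul]

theorem lintegral_lintegral_comp_div_mul {G h : ℝ → ℝ≥0∞} (hG : Measurable G)
    (hh : AEMeasurable h (volume.restrict (Ioi 0))) :
    ∫⁻ x, ∫⁻ t in Ioi 0, G (x / t) * h t =
      (∫⁻ t in Ioi 0, ENNReal.ofReal t * h t) * ∫⁻ x, G x := by
  rw [lintegral_lintegral_swap ((hG.comp (measurable_fst.div measurable_snd)).aemeasurable.mul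
    hh.comp_snd), ← lintegral_mul_const'' _ (by fun_prop)]
  refine setLIntegral_congr_fun measurableSet_Ioi fun t ht => ?_
  rw [lintegral_mul_const _ (by fun_prop : Measurable fun x => G (x / t)),
    lintegral_comp_div_const hG ht]
  ring

theorem lintegral_rpow_lintegral_comp_div_le {p : ℝ} (hp : 1 ≤ p) {g w : ℝ → ℝ≥0∞}
    (hg : Measurable g) (hw : Measurable w) :
    ∫⁻ x, (∫⁻ t in Ioi 0, g (x / t) * w t) ^ p ≤
      (∫⁻ t in Ioi 0, ENNReal.ofReal t ^ (1 / p) * w t) ^ p * ∫⁻ x, g x ^ p := by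
  have hp0 : 0 < p := by linarith
  set s : ℝ → ℝ≥0∞ := fun t => ENNReal.ofReal t ^ (1 / p)
  set K := ∫⁻ t in Ioi 0, s t * w t
  have hs0 : ∀ t ∈ Ioi (0 : ℝ), s t ≠ 0 := fun t ht => by simp [s, ht.out, hp0]
  have hstop : ∀ t, s t ≠ ⊤ := fun t => by simp [s, hp0.le]
  have hscale : ∀ t ∈ Ioi (0 : ℝ), ENNReal.ofReal t * (s t ^ (1 - p) * w t) = s t * w t := by
    intro t ht
    have hts : ENNReal.ofReal t = s t ^ p := by
      rw [← ENNReal.rpow_mul, one_div_mul_cancel hp0.ne', ENNReal.rpow_one]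
    rw [hts, ← mul_assoc, ← ENNReal.rpow_add _ _ (hs0 t ht) (hstop t), add_sub_cancel,
      ENNReal.rpow_one]
  calc ∫⁻ x, (∫⁻ t in Ioi 0, g (x / t) * w t) ^ p
      ≤ ∫⁻ x, (∫⁻ t in Ioi 0, g (x / t) ^ p * (s t ^ (1 - p) * w t)) * K ^ (p - 1) :=
        lintegral_mono fun x => by
          simpa only [mul_assoc] using ENNReal.lintegral_mul_rpow_le_weighted hp (by fun_prop)
            hw.aemeasurable (by fun_prop) ((ae_restrict_mem measurableSet_Ioi).mono hs0)
            (.of_forall hstop)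
    _ = (∫⁻ x, ∫⁻ t in Ioi 0, g (x / t) ^ p * (s t ^ (1 - p) * w t)) * K ^ (p - 1) :=
        lintegral_mul_const _ (Measurable.lintegral_prod_right'
          (f := fun z : ℝ × ℝ => g (z.1 / z.2) ^ p * (s z.2 ^ (1 - p) * w z.2)) (by fun_prop))
    _ = K * (∫⁻ x, g x ^ p) * K ^ (p - 1) := by
        rw [lintegral_lintegral_comp_div_mul (G := fun y => g y ^ p) (by fun_prop) (by fun_prop),
          setLIntegral_congr_fun measurableSet_Ioi hscale]
    _ = K ^ p * ∫⁻ x, g x ^ p := by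
        nth_rw 1 [mul_right_comm, ← ENNReal.rpow_one K]
        rw [← ENNReal.rpow_add_of_nonneg _ _ zero_le_one (by linarith), add_sub_cancel]

theorem eLpNorm_lintegral_comp_div_le {p : ℝ} (hp : 1 ≤ p) {g w : ℝ → ℝ≥0∞}
    (hg : Measurable g) (hw : Measurable w) :
    eLpNorm (fun x => ∫⁻ t in Ioi 0, g (x / t) * w t) (ENNReal.ofReal p) volume ≤
      (∫⁻ t in Ioi 0, ENNReal.ofReal t ^ (1 / p) * w t) * eLpNorm g (ENNReal.ofReal p) volume := by
  have hp0 : 0 < p := by linarith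
  simp only [eLpNorm_eq_lintegral_rpow_enorm_toReal (ENNReal.ofReal_pos.mpr hp0).ne'
    ENNReal.ofReal_ne_top, ENNReal.toReal_ofReal hp0.le, enorm_eq_self]
  calc _ ≤ ((∫⁻ t in Ioi 0, ENNReal.ofReal t ^ (1 / p) * w t) ^ p * ∫⁻ x, g x ^ p) ^ (1 / p) :=
        ENNReal.rpow_le_rpow (lintegral_rpow_lintegral_comp_div_le hp hg hw) (by positivity)
    _ = _ := by
        rw [ENNReal.mul_rpow_of_nonneg _ _ (by positivity), ← ENNReal.rpow_mul,
          mul_one_div_cancel hp0.ne', ENNReal.rpow_one]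

theorem eLpNorm_hausdorffOp_le {p : ℝ} (hp : 1 ≤ p) {φ : ℝ → ℝ}
    (hφ : ∀ t ∈ Ioi (0 : ℝ), 0 ≤ φ t) (hφm : AEStronglyMeasurable φ (volume.restrict (Ioi 0)))
    {f : ℝ → ℂ} (hf : AEStronglyMeasurable f) :
    eLpNorm (hausdorffOp φ f) (ENNReal.ofReal p) volume ≤
      (∫⁻ t in Ioi 0, ENNReal.ofReal (φ t / t ^ (1 - 1 / p))) *
        eLpNorm f (ENNReal.ofReal p) volume := by
  -- dominating `‖f‖ₑ` everywhere, not just a.e., spares us showing that `t ↦ x / t` maps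
  -- null sets to null sets for each `x`
  obtain ⟨g, hgm, hfg, hg⟩ := hf.enorm.exists_measurable_ge_ae_eq
  have hw : AEMeasurable (fun t => ENNReal.ofReal (φ t / t)) (volume.restrict (Ioi 0)) :=
    (hφm.aemeasurable.div measurable_id.aemeasurable).ennreal_ofReal
  have hpoint (x : ℝ) :
      ‖hausdorffOp φ f x‖ₑ ≤ ‖∫⁻ t in Ioi 0, g (x / t) * hw.mk _ t‖ₑ := by
    rw [enorm_eq_self]
    refine (enorm_integral_le_lintegral_enorm _).trans (lintegral_mono_ae ?_)
    filter_upwards [hw.ae_eq_mk, ae_restrict_mem measurableSet_Ioi] with t hwt ht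
    rw [enorm_mul, ← hwt]
    refine mul_le_mul' (hfg _) (le_of_eq ?_)
    rw [← ofReal_norm, Complex.norm_real, Real.norm_of_nonneg (div_nonneg (hφ t ht) ht.out.le)]
  have hK : ∫⁻ t in Ioi 0, ENNReal.ofReal t ^ (1 / p) * hw.mk _ t =
      ∫⁻ t in Ioi 0, ENNReal.ofReal (φ t / t ^ (1 - 1 / p)) := by
    refine lintegral_congr_ae ?_
    filter_upwards [hw.ae_eq_mk, ae_restrict_mem measurableSet_Ioi] with t hwt ht
    rw [← hwt, ENNReal.ofReal_rpow_of_pos ht, ← ENNReal.ofReal_mul (Real.rpow_nonneg ht.out.le _),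
      Real.rpow_sub ht, Real.rpow_one]
    congr 1
    field_simp
  calc _ ≤ eLpNorm (fun x => ∫⁻ t in Ioi 0, g (x / t) * hw.mk _ t) (ENNReal.ofReal p) volume :=
        eLpNorm_mono_enorm hpoint
    _ ≤ _ := eLpNorm_lintegral_comp_div_le hp hgm hw.measurable_mk
    _ = _ := by rw [hK, eLpNorm_congr_ae hg, eLpNorm_enorm]

theorem ae_restrict_Ioi_div_rpow_nonneg {φ : ℝ → ℝ} (hφ : ∀ t ∈ Ioi (0 : ℝ), 0 ≤ φ t) (s : ℝ) :
    0 ≤ᵐ[volume.restrict (Ioi 0)] fun t => φ t / t ^ s := by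
  filter_upwards [ae_restrict_mem measurableSet_Ioi] with t ht
  exact div_nonneg (hφ t ht) (Real.rpow_nonneg ht.out.le _)

theorem hausdorffLpBound_integral {p : ℝ} (hp : 1 ≤ p) {φ : ℝ → ℝ}
    (hφ : ∀ t ∈ Ioi (0 : ℝ), 0 ≤ φ t) (hloc : LocallyIntegrableOn φ (Ioi 0))
    (hint : IntegrableOn (fun t => φ t / t ^ (1 - 1 / p)) (Ioi 0)) :
    HausdorffLpBound p φ (∫ t in Ioi 0, φ t / t ^ (1 - 1 / p)) := fun f hf => by
  rw [ofReal_integral_eq_lintegral_ofReal hint (ae_restrict_Ioi_div_rpow_nonneg hφ _)]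
  exact eLpNorm_hausdorffOp_le hp hφ hloc.aestronglyMeasurable hf.1

theorem MeasureTheory.LocallyIntegrableOn.integrableOn_Icc_div_rpow {φ : ℝ → ℝ}
    (hφ : LocallyIntegrableOn φ (Ioi 0)) {a : ℝ} (ha : 0 < a) (b s : ℝ) :
    IntegrableOn (fun t => φ t / t ^ s) (Icc a b) := by
  have hpos : ∀ t ∈ Icc a b, 0 < t := fun t ht => ha.trans_le ht.1
  simp_rw [div_eq_mul_inv]
  refine (hφ.integrableOn_compact_subset hpos isCompact_Icc).mul_continuousOn ?_ isCompact_Icc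
  exact (continuousOn_id.rpow_const fun t ht => .inl (hpos t ht).ne').inv₀
    fun t ht => (Real.rpow_pos_of_pos (hpos t ht) s).ne'

theorem div_mem_Ioo_one_iff {x t N : ℝ} (ht : 0 < t) (hN : 0 < N) :
    x / t ∈ Ioo 1 N ↔ t ∈ Ioo (x / N) x := by
  rw [mem_Ioo, mem_Ioo, one_lt_div ht, div_lt_iff₀ ht, div_lt_iff₀ hN, mul_comm, and_comm]

theorem hausdorffOp_truncRpow_eq (φ : ℝ → ℝ) (s : ℝ) {N x : ℝ} (hN : 0 < N) (hx : 0 < x) :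
    hausdorffOp φ (truncRpow s N) x =
      ((∫ t in Ioo (x / N) x, (x / t) ^ (-s) * (φ t / t) : ℝ) : ℂ) := by
  have hind : ∀ t ∈ Ioi (0 : ℝ), truncRpow s N (x / t) * ((φ t / t : ℝ) : ℂ) =
      (((Ioo (x / N) x).indicator (fun t => (x / t) ^ (-s) * (φ t / t)) t : ℝ) : ℂ) := by
    intro t ht
    by_cases htx : t ∈ Ioo (x / N) x
    · rw [truncRpow, indicator_of_mem ((div_mem_Ioo_one_iff ht hN).mpr htx),
        indicator_of_mem htx]
      push_cast
      rfl
    · rw [truncRpow, indicator_of_notMem (mt (div_mem_Ioo_one_iff ht hN).mp htx),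
        indicator_of_notMem htx]
      simp
  rw [hausdorffOp, setIntegral_congr_fun measurableSet_Ioi hind, integral_complex_ofReal,
    integral_indicator measurableSet_Ioo, Measure.restrict_restrict measurableSet_Ioo,
    inter_eq_left.mpr (Ioo_subset_Ioi_self.trans (Ioi_subset_Ioi (div_pos hx hN).le))]

theorem rpow_mul_setIntegral_le_norm_hausdorffOp_truncRpow {φ : ℝ → ℝ}
    (hφ : ∀ t ∈ Ioi (0 : ℝ), 0 ≤ φ t) (hloc : LocallyIntegrableOn φ (Ioi 0)) (s : ℝ)
    {δ b N x : ℝ} (hN : 0 < N) (hx : 0 < x) (hxN : x / N ≤ δ) (hbx : b ≤ x) :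
    x ^ (-s) * ∫ t in Ioo δ b, φ t / t ^ (1 - s) ≤ ‖hausdorffOp φ (truncRpow s N) x‖ := by
  have hxN0 : 0 < x / N := div_pos hx hN
  set G : ℝ → ℝ := fun t => (x / t) ^ (-s) * (φ t / t)
  have hGint : IntegrableOn G (Ioo (x / N) x) := by
    have hcont : ContinuousOn (fun t : ℝ => (x / t) ^ (-s)) (Icc (x / N) x) :=
      (continuousOn_const.div continuousOn_id fun t ht => (hxN0.trans_le ht.1).ne').rpow_const
        fun t ht => .inl (div_pos hx (hxN0.trans_le ht.1)).ne'
    refine (((hloc.integrableOn_Icc_div_rpow hxN0 x 1).mul_continuousOn hcont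
      isCompact_Icc).mono_set Ioo_subset_Icc_self).congr_fun (fun t _ => ?_) measurableSet_Ioo
    simp only [G, Real.rpow_one, mul_comm]
  have hGδ : ∫ t in Ioo δ b, G t = x ^ (-s) * ∫ t in Ioo δ b, φ t / t ^ (1 - s) := by
    rw [← integral_const_mul]
    refine setIntegral_congr_fun measurableSet_Ioo fun t ht => ?_
    have ht0 : 0 < t := hxN0.trans_le (hxN.trans ht.1.le)
    simp only [G]
    rw [Real.div_rpow hx.le ht0.le, Real.rpow_sub ht0, Real.rpow_one, Real.rpow_neg ht0.le]
    field_simp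
  have hG0 : 0 ≤ᵐ[volume.restrict (Ioo (x / N) x)] G := by
    filter_upwards [ae_restrict_mem measurableSet_Ioo] with t ht
    have ht0 : 0 < t := hxN0.trans ht.1
    exact mul_nonneg (Real.rpow_nonneg (div_pos hx ht0).le _) (div_nonneg (hφ t ht0) ht0.le)
  rw [hausdorffOp_truncRpow_eq φ s hN hx, Complex.norm_real, ← hGδ]
  exact (setIntegral_mono_set hGint hG0 (Ioo_subset_Ioo hxN hbx).eventuallyLE).trans
    (Real.le_norm_self _)

theorem eLpNorm_indicator_rpow_neg_one_div {p : ℝ} (hp : 0 < p) {a b : ℝ} (ha : 0 < a)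
    (hab : a ≤ b) :
    eLpNorm ((Ioo a b).indicator fun x : ℝ => x ^ (-(1 / p))) (ENNReal.ofReal p) volume =
      ENNReal.ofReal (Real.log (b / a)) ^ (1 / p) := by
  rw [eLpNorm_indicator_eq_eLpNorm_restrict measurableSet_Ioo,
    eLpNorm_eq_lintegral_rpow_enorm_toReal (ENNReal.ofReal_pos.mpr hp).ne' ENNReal.ofReal_ne_top,
    ENNReal.toReal_ofReal hp.le]
  congr 1
  have hinv : ∀ x ∈ Ioo a b, ‖x ^ (-(1 / p))‖ₑ ^ p = ENNReal.ofReal x⁻¹ := by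
    intro x hx
    have hx0 : 0 < x := ha.trans hx.1
    rw [Real.enorm_of_nonneg (Real.rpow_nonneg hx0.le _), ENNReal.ofReal_rpow_of_pos
      (Real.rpow_pos_of_pos hx0 _), ← Real.rpow_mul hx0.le, neg_mul, one_div_mul_cancel hp.ne',
      Real.rpow_neg_one]
  rw [setLIntegral_congr_fun measurableSet_Ioo hinv, ← ofReal_integral_eq_lintegral_ofReal,
    integral_Ioc_eq_integral_Ioo.symm, ← intervalIntegral.integral_of_le hab,
    integral_inv_of_pos ha (ha.trans_le hab)]
  · exact (continuousOn_inv₀.mono fun x hx => (ha.trans_le hx.1).ne').integrableOn_Icc.mono_set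
      Ioo_subset_Icc_self
  · filter_upwards [ae_restrict_mem measurableSet_Ioo] with x hx
    exact inv_nonneg.mpr (ha.trans hx.1).le

theorem eLpNorm_truncRpow {p : ℝ} (hp : 0 < p) {N : ℝ} (hN : 1 ≤ N) :
    eLpNorm (truncRpow (1 / p) N) (ENNReal.ofReal p) volume =
      ENNReal.ofReal (Real.log N) ^ (1 / p) := by
  rw [eLpNorm_congr_norm_ae (f := truncRpow (1 / p) N)
    (g := (Ioo 1 N).indicator fun y => y ^ (-(1 / p))) (.of_forall fun y => Complex.norm_real _),
    eLpNorm_indicator_rpow_neg_one_div hp one_pos hN, div_one]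

theorem memLp_truncRpow {p : ℝ} (hp : 0 < p) {N : ℝ} (hN : 1 ≤ N) :
    MemLp (truncRpow (1 / p) N) (ENNReal.ofReal p) volume :=
  ⟨(Complex.measurable_ofReal.comp ((measurable_id.pow_const _).indicator
    measurableSet_Ioo)).aestronglyMeasurable, eLpNorm_truncRpow hp hN ▸ by finiteness⟩

theorem ofReal_mul_log_rpow_le_eLpNorm_hausdorffOp {p : ℝ} (hp : 0 < p) {φ : ℝ → ℝ}
    (hφ : ∀ t ∈ Ioi (0 : ℝ), 0 ≤ φ t) (hloc : LocallyIntegrableOn φ (Ioi 0))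
    {δ b N : ℝ} (hδ : 0 < δ) (hb : 0 < b) (hbN : b ≤ N * δ) :
    ENNReal.ofReal (∫ t in Ioo δ b, φ t / t ^ (1 - 1 / p)) *
        ENNReal.ofReal (Real.log (N * δ / b)) ^ (1 / p) ≤
      eLpNorm (hausdorffOp φ (truncRpow (1 / p) N)) (ENNReal.ofReal p) volume := by
  set I := ∫ t in Ioo δ b, φ t / t ^ (1 - 1 / p)
  have hI0 : 0 ≤ I := setIntegral_nonneg measurableSet_Ioo fun t ht =>
    div_nonneg (hφ t (hδ.trans ht.1)) (Real.rpow_nonneg (hδ.trans ht.1).le _)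
  have hN : 0 < N := pos_of_mul_pos_left (hb.trans_le hbN) hδ.le
  rw [← eLpNorm_indicator_rpow_neg_one_div hp hb hbN, ← Real.enorm_of_nonneg hI0,
    ← eLpNorm_const_smul]
  refine eLpNorm_mono fun x => ?_
  by_cases hx : x ∈ Ioo b (N * δ)
  · have hx0 : 0 < x := hb.trans hx.1
    rw [Pi.smul_apply, indicator_of_mem hx, smul_eq_mul,
      Real.norm_of_nonneg (mul_nonneg hI0 (Real.rpow_nonneg hx0.le _)), mul_comm]
    exact rpow_mul_setIntegral_le_norm_hausdorffOp_truncRpow hφ hloc _ hN hx0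
      ((div_le_iff₀ hN).mpr (by linarith [hx.2])) hx.1.le
  · simp [indicator_of_notMem hx]

theorem le_of_eventually_mul_rpow_sub_le {I C c q : ℝ}
    (h : ∀ᶠ L in atTop, I * (L - c) ^ q ≤ C * L ^ q) : I ≤ C := by
  have hlim : Tendsto (fun L : ℝ => I * (1 - c / L) ^ q) atTop (𝓝 I) := by
    have h1 : Tendsto (fun L : ℝ => 1 - c / L) atTop (𝓝 1) := by
      simpa using tendsto_const_nhds.sub ((tendsto_const_nhds (x := c)).div_atTop tendsto_id)
    simpa using (h1.rpow_const (.inl one_ne_zero)).const_mul I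
  refine le_of_tendsto hlim ?_
  filter_upwards [h, eventually_gt_atTop (max c 0)] with L hL hLc
  have hL0 : 0 < L := (le_max_right c 0).trans_lt hLc
  rw [one_sub_div hL0.ne', Real.div_rpow (by linarith [le_max_left c 0]) hL0.le,
    ← mul_div_assoc, div_le_iff₀ (Real.rpow_pos_of_pos hL0 q)]
  exact hL

theorem setIntegral_Ioo_le_of_hausdorffLpBound {p : ℝ} (hp : 1 ≤ p) {φ : ℝ → ℝ}
    (hφ : ∀ t ∈ Ioi (0 : ℝ), 0 ≤ φ t) (hloc : LocallyIntegrableOn φ (Ioi 0)) {C : ℝ}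
    (hC0 : 0 ≤ C) (hC : HausdorffLpBound p φ C) {δ : ℝ} (hδ : 0 < δ) (b : ℝ) :
    ∫ t in Ioo δ b, φ t / t ^ (1 - 1 / p) ≤ C := by
  rcases le_or_gt b δ with hbδ | hδb
  · rwa [Ioo_eq_empty hbδ.not_gt, Measure.restrict_empty, integral_zero_measure]
  have hp0 : 0 < p := by linarith
  have hb : 0 < b := hδ.trans hδb
  have hI0 : 0 ≤ ∫ t in Ioo δ b, φ t / t ^ (1 - 1 / p) :=
    setIntegral_nonneg measurableSet_Ioo fun t ht =>
      div_nonneg (hφ t (hδ.trans ht.1)) (Real.rpow_nonneg (hδ.trans ht.1).le _)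
  refine le_of_eventually_mul_rpow_sub_le (c := Real.log (b / δ)) (q := 1 / p) ?_
  filter_upwards [eventually_gt_atTop (Real.log (b / δ))] with L hL
  have hL0 : 0 < L := (Real.log_nonneg ((one_le_div hδ).mpr hδb.le)).trans_lt hL
  have hN : 1 ≤ Real.exp L := Real.one_le_exp hL0.le
  have hbN : b < Real.exp L * δ := by
    rwa [← div_lt_iff₀ hδ, ← Real.log_lt_iff_lt_exp (div_pos hb hδ)]
  have hlog : Real.log (Real.exp L * δ / b) = L - Real.log (b / δ) := by
    rw [Real.log_div (by positivity) hb.ne', Real.log_mul (Real.exp_pos L).ne' hδ.ne',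
      Real.log_exp, Real.log_div hb.ne' hδ.ne']
    ring
  have key := (ofReal_mul_log_rpow_le_eLpNorm_hausdorffOp hp0 hφ hloc hδ hb hbN.le).trans
    ((hC _ (memLp_truncRpow hp0 hN)).trans_eq (by rw [eLpNorm_truncRpow hp0 hN, Real.log_exp]))
  rwa [hlog, ENNReal.ofReal_rpow_of_nonneg (by linarith) (by positivity),
    ENNReal.ofReal_rpow_of_nonneg hL0.le (by positivity), ← ENNReal.ofReal_mul hI0,
    ← ENNReal.ofReal_mul hC0, ENNReal.ofReal_le_ofReal_iff (by positivity)] at key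

theorem lintegral_le_of_hausdorffLpBound {p : ℝ} (hp : 1 ≤ p) {φ : ℝ → ℝ}
    (hφ : ∀ t ∈ Ioi (0 : ℝ), 0 ≤ φ t) (hloc : LocallyIntegrableOn φ (Ioi 0)) {C : ℝ}
    (hC0 : 0 ≤ C) (hC : HausdorffLpBound p φ C) :
    ∫⁻ t in Ioi 0, ENNReal.ofReal (φ t / t ^ (1 - 1 / p)) ≤ ENNReal.ofReal C := by
  have hcover : AECover (volume.restrict (Ioi 0)) atTop fun n : ℕ => Ioo (1 / ((n : ℝ) + 1)) n :=
    (aecover_Ioi_of_Ioi tendsto_one_div_add_atTop_nhds_zero_nat).inter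
      (aecover_Iio tendsto_natCast_atTop_atTop)
  have hmeas : AEMeasurable (fun t => ENNReal.ofReal (φ t / t ^ (1 - 1 / p)))
      (volume.restrict (Ioi 0)) :=
    (hloc.aestronglyMeasurable.aemeasurable.div
      (measurable_id.pow_const _).aemeasurable).ennreal_ofReal
  refine le_of_tendsto' (hcover.lintegral_tendsto_of_countably_generated hmeas) fun n => ?_
  have hδ : (0 : ℝ) < 1 / ((n : ℝ) + 1) := by positivity
  have hsub : Ioo (1 / ((n : ℝ) + 1)) n ⊆ Ioi 0 := Ioo_subset_Ioi_self.trans (Ioi_subset_Ioi hδ.le)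
  rw [Measure.restrict_restrict measurableSet_Ioo, inter_eq_left.mpr hsub,
    ← ofReal_integral_eq_lintegral_ofReal
      ((hloc.integrableOn_Icc_div_rpow hδ n _).mono_set Ioo_subset_Icc_self)
      (ae_restrict_of_ae_restrict_of_subset hsub (ae_restrict_Ioi_div_rpow_nonneg hφ _))]
  exact ENNReal.ofReal_le_ofReal (setIntegral_Ioo_le_of_hausdorffLpBound hp hφ hloc hC0 hC hδ n)

/-- For p ∈ [1,∞) and φ ≥ 0 locally integrable on (0,∞), H_φ is bounded on
L^p(ℝ) iff ∫₀^∞ φ(t) t^{-(1-1/p)} dt < ∞, and in that case the operator norm of H_φ equals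
this integral (it is the least admissible constant). -/
theorem hausdorff_Lp_norm (p : ℝ) (hp : 1 ≤ p) (φ : ℝ → ℝ)
    (hφ : ∀ t ∈ Ioi (0:ℝ), 0 ≤ φ t)
    (hloc : LocallyIntegrableOn φ (Ioi 0)) :
    ((∃ C : ℝ, 0 ≤ C ∧ ∀ f : ℝ → ℂ, MemLp f (ENNReal.ofReal p) →
        eLpNorm (fun x : ℝ => ∫ t in Ioi (0:ℝ), f (x / t) * ((φ t / t : ℝ) : ℂ))
            (ENNReal.ofReal p) volume ≤
          ENNReal.ofReal C * eLpNorm f (ENNReal.ofReal p) volume) ↔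
      IntegrableOn (fun t : ℝ => φ t / t ^ (1 - 1 / p)) (Ioi 0)) ∧
    (IntegrableOn (fun t : ℝ => φ t / t ^ (1 - 1 / p)) (Ioi 0) →
      IsLeast {C : ℝ | 0 ≤ C ∧ ∀ f : ℝ → ℂ, MemLp f (ENNReal.ofReal p) →
          eLpNorm (fun x : ℝ => ∫ t in Ioi (0:ℝ), f (x / t) * ((φ t / t : ℝ) : ℂ))
              (ENNReal.ofReal p) volume ≤
            ENNReal.ofReal C * eLpNorm f (ENNReal.ofReal p) volume}
        (∫ t in Ioi (0:ℝ), φ t / t ^ (1 - 1 / p))) := by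
  show ((∃ C, 0 ≤ C ∧ HausdorffLpBound p φ C) ↔ _) ∧
    (_ → IsLeast {C | 0 ≤ C ∧ HausdorffLpBound p φ C} _)
  have hnonneg := ae_restrict_Ioi_div_rpow_nonneg hφ (1 - 1 / p)
  have hmeas : AEStronglyMeasurable (fun t => φ t / t ^ (1 - 1 / p)) (volume.restrict (Ioi 0)) :=
    hloc.aestronglyMeasurable.div₀ (measurable_id.pow_const _).aestronglyMeasurable
  have hupper (hint : IntegrableOn (fun t => φ t / t ^ (1 - 1 / p)) (Ioi 0)) :
      0 ≤ ∫ t in Ioi 0, φ t / t ^ (1 - 1 / p) ∧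
        HausdorffLpBound p φ (∫ t in Ioi 0, φ t / t ^ (1 - 1 / p)) :=
    ⟨integral_nonneg_of_ae hnonneg, hausdorffLpBound_integral hp hφ hloc hint⟩
  refine ⟨⟨fun ⟨C, hC0, hC⟩ => ?_, fun hint => ⟨_, hupper hint⟩⟩,
    fun hint => ⟨hupper hint, fun C ⟨hC0, hC⟩ => ?_⟩⟩
  · rw [IntegrableOn, ← lintegral_ofReal_ne_top_iff_integrable hmeas hnonneg]
    exact ne_top_of_le_ne_top ENNReal.ofReal_ne_top
      (lintegral_le_of_hausdorffLpBound hp hφ hloc hC0 hC)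
  · rw [← ENNReal.ofReal_le_ofReal_iff hC0, ofReal_integral_eq_lintegral_ofReal hint hnonneg]
    exact lintegral_le_of_hausdorffLpBound hp hφ hloc hC0 hC
end

section
/- Let φ be a nonnegative locally integrable function on (0,∞)ⁿ with ∫_{(0,∞)ⁿ} φ(t) dt < ∞. Then for every f ∈ L¹(ℝⁿ), the Fourier transform of H_φ f satisfies (H_φ f)^(y₁,…,yₙ) = ∫_{(0,∞)ⁿ} f̂(t₁y₁,…,tₙyₙ) φ(t₁,…,tₙ) dt₁⋯dtₙ = H*_φ f̂(y) for all y ∈ ℝⁿ. -/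
/-!
Both sides are iterated integrals of `e^{-2πi x·y} f(x/t) φ(t)/(t₁⋯tₙ)`. Since coordinatewise
division by `t` scales Lebesgue measure by `|t₁⋯tₙ|`, the absolute integrand has double integral
`‖f‖₁ ‖φ‖₁`, so Fubini swaps the integrals; for fixed `t` the substitution `x = t·u` turns
`x·y` into `u·(t·y)` and cancels the factor `1/(t₁⋯tₙ)`.
-/

open MeasureTheory Real

section PiDiv

variable {ι : Type*} {t : ι → ℝ}

theorem measurableEmbedding_pi_div (ht : ∀ i, t i ≠ 0) :
    MeasurableEmbedding fun x : ι → ℝ => fun i => x i / t i := by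
  convert (MeasurableEquiv.piCongrRight fun i =>
    MeasurableEquiv.mulRight₀ (t i)⁻¹ (inv_ne_zero (ht i))).measurableEmbedding using 1
  funext x i
  exact div_eq_mul_inv _ _

variable [Fintype ι]

theorem map_volume_pi_div (ht : ∀ i, t i ≠ 0) :
    Measure.map (fun x : ι → ℝ => fun i => x i / t i) volume
      = ENNReal.ofReal |∏ i, t i| • volume := by
  classical
  have hdet : LinearMap.det (Matrix.toLin' (Matrix.diagonal fun i => (t i)⁻¹))
      = (∏ i, t i)⁻¹ := by
    rw [LinearMap.det_toLin', Matrix.det_diagonal, Finset.prod_inv_distrib]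
  have hmap := Measure.map_linearMap_addHaar_eq_smul_addHaar volume
    (hdet ▸ inv_ne_zero (Finset.prod_ne_zero_iff.mpr fun i _ => ht i))
  rw [hdet, inv_inv] at hmap
  have hdiv : (fun x : ι → ℝ => fun i => x i / t i)
      = Matrix.toLin' (Matrix.diagonal fun i => (t i)⁻¹) := by
    funext x i
    simp [Matrix.mulVec_diagonal, div_eq_inv_mul]
  rwa [hdiv]

theorem quasiMeasurePreserving_pi_div (ht : ∀ i, t i ≠ 0) :
    Measure.QuasiMeasurePreserving (fun x : ι → ℝ => fun i => x i / t i) volume volume :=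
  ⟨(measurableEmbedding_pi_div ht).measurable, by
    rw [map_volume_pi_div ht]; exact Measure.smul_absolutelyContinuous⟩

theorem integral_comp_pi_div {E : Type*} [NormedAddCommGroup E] [NormedSpace ℝ E]
    (ht : ∀ i, t i ≠ 0) (g : (ι → ℝ) → E) :
    ∫ x : ι → ℝ, g (fun i => x i / t i) = |∏ i, t i| • ∫ u, g u := by
  rw [← (measurableEmbedding_pi_div ht).integral_map, map_volume_pi_div ht,
    integral_smul_measure, ENNReal.toReal_ofReal (abs_nonneg _)]

theorem MeasureTheory.Integrable.comp_pi_div {E : Type*} [NormedAddCommGroup E]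
    (ht : ∀ i, t i ≠ 0) {g : (ι → ℝ) → E} (hg : Integrable g) :
    Integrable fun x : ι → ℝ => g (fun i => x i / t i) := by
  refine (measurableEmbedding_pi_div ht).integrable_map_iff.mp ?_
  rw [map_volume_pi_div ht]
  exact hg.smul_measure ENNReal.ofReal_ne_top

end PiDiv

section Hausdorff

variable {ι : Type*} [Fintype ι]

theorem integrable_comp_pi_div_mul_prod {ν : Measure (ι → ℝ)} [SFinite ν]
    (hν : ∀ᵐ t ∂ν, ∀ i, t i ≠ 0) {φ : (ι → ℝ) → ℝ} (hφ : Integrable φ ν)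
    {f : (ι → ℝ) → ℂ} (hf : Integrable f) :
    Integrable (fun p : (ι → ℝ) × (ι → ℝ) =>
      f (fun i => p.1 i / p.2 i) * ((φ p.2 / ∏ i, p.2 i : ℝ) : ℂ)) (volume.prod ν) := by
  -- `f` is only a.e. measurable: joint measurability of `f (x / t)` needs null sets preserved
  have hqmp : Measure.QuasiMeasurePreserving
      (fun p : (ι → ℝ) × (ι → ℝ) => fun i => p.1 i / p.2 i) (volume.prod ν) volume :=
    QuasiMeasurePreserving.prod_of_left (by fun_prop)
      (hν.mono fun t ht => quasiMeasurePreserving_pi_div ht)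
  have hweight : AEStronglyMeasurable (fun t : ι → ℝ => ((φ t / ∏ i, t i : ℝ) : ℂ)) ν :=
    Complex.continuous_ofReal.comp_aestronglyMeasurable
      (hφ.1.div₀ (by fun_prop : Measurable fun t : ι → ℝ => ∏ i, t i).aestronglyMeasurable)
  refine (integrable_prod_iff'
    ((hf.1.comp_quasiMeasurePreserving hqmp).mul hweight.comp_snd)).mpr ⟨?_, ?_⟩
  · filter_upwards [hν] with t ht
    exact (hf.comp_pi_div ht).mul_const ((φ t / ∏ i, t i : ℝ) : ℂ)
  · refine (hφ.norm.const_mul (∫ x, ‖f x‖)).congr ?_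
    filter_upwards [hν] with t ht
    have hprod : ∏ i, t i ≠ 0 := Finset.prod_ne_zero_iff.mpr fun i _ => ht i
    simp only [Function.comp_apply, Pi.mul_apply, norm_mul, Complex.norm_real, norm_div,
      integral_mul_const, integral_comp_pi_div ht fun x => ‖f x‖, smul_eq_mul,
      Real.norm_eq_abs]
    field_simp

theorem integral_fourier_mul_comp_pi_div {t : ι → ℝ} (ht : ∀ i, t i ≠ 0) (y : ι → ℝ)
    (f : (ι → ℝ) → ℂ) :
    ∫ x : ι → ℝ, Complex.exp (((-2 * π * ∑ i, x i * y i : ℝ) : ℂ) * Complex.I) *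
        f (fun i => x i / t i)
      = |∏ i, t i| • ∫ x : ι → ℝ,
          Complex.exp (((-2 * π * ∑ i, x i * (t i * y i) : ℝ) : ℂ) * Complex.I) * f x := by
  rw [← integral_comp_pi_div ht]
  congr with x
  have hdot : ∑ i, x i / t i * (t i * y i) = ∑ i, x i * y i :=
    Finset.sum_congr rfl fun i _ => by field_simp [ht i]
  rw [hdot]

theorem integral_fourier_mul_comp_pi_div_mul {t : ι → ℝ} (ht : ∀ i, 0 < t i) (y : ι → ℝ)
    (f : (ι → ℝ) → ℂ) (c : ℝ) :
    ∫ x : ι → ℝ, Complex.exp (((-2 * π * ∑ i, x i * y i : ℝ) : ℂ) * Complex.I) *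
        (f (fun i => x i / t i) * ((c / ∏ i, t i : ℝ) : ℂ))
      = (∫ x : ι → ℝ,
          Complex.exp (((-2 * π * ∑ i, x i * (t i * y i) : ℝ) : ℂ) * Complex.I) * f x) * c := by
  have hprod : 0 < ∏ i, t i := Finset.prod_pos fun i _ => ht i
  simp_rw [← mul_assoc (Complex.exp _), integral_mul_const,
    integral_fourier_mul_comp_pi_div (fun i => (ht i).ne'), abs_of_pos hprod, Complex.real_smul,
    Complex.ofReal_div]
  have hprod' : ((∏ i, t i : ℝ) : ℂ) ≠ 0 := by exact_mod_cast hprod.ne'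
  rw [mul_comm ((∏ i, t i : ℝ) : ℂ), mul_assoc, mul_div_cancel₀ _ hprod']

end Hausdorff

theorem fourier_hausdorff_general (n : ℕ) (φ : (Fin n → ℝ) → ℝ)
    (hint : IntegrableOn φ {t : Fin n → ℝ | ∀ i, 0 < t i})
    (f : (Fin n → ℝ) → ℂ) (hf : Integrable f) (y : Fin n → ℝ) :
    (∫ x : Fin n → ℝ,
        Complex.exp (((-2 * π * ∑ i, x i * y i : ℝ) : ℂ) * Complex.I) *
          ∫ t in {t : Fin n → ℝ | ∀ i, 0 < t i},
            f (fun i => x i / t i) * ((φ t / ∏ i, t i : ℝ) : ℂ)) =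
      ∫ t in {t : Fin n → ℝ | ∀ i, 0 < t i},
        (∫ x : Fin n → ℝ,
          Complex.exp (((-2 * π * ∑ i, x i * (t i * y i) : ℝ) : ℂ) * Complex.I) * f x) *
          ((φ t : ℝ) : ℂ) := by
  set S : Set (Fin n → ℝ) := {t | ∀ i, 0 < t i}
  have hS : MeasurableSet S := by
    simp only [S, Set.ofPred_forall]
    exact .iInter fun i => measurableSet_lt measurable_const (measurable_pi_apply i)
  have hpos : ∀ᵐ t ∂volume.restrict S, t ∈ S := ae_restrict_mem hS
  have hF :=
    (integrable_comp_pi_div_mul_prod (hpos.mono fun t ht i => (ht i).ne') hint hf).bdd_mul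
    (by fun_prop : Continuous fun p : (Fin n → ℝ) × (Fin n → ℝ) =>
      Complex.exp (((-2 * π * ∑ i, p.1 i * y i : ℝ) : ℂ) * Complex.I)).aestronglyMeasurable
    (ae_of_all _ fun p => (Complex.norm_exp_ofReal_mul_I _).le)
  simp_rw [← integral_const_mul]
  rw [integral_integral_swap hF]
  exact setIntegral_congr_fun hS fun t ht => integral_fourier_mul_comp_pi_div_mul ht y f (φ t)

/-- If φ ≥ 0 is locally integrable on (0,∞)ⁿ with ∫_{(0,∞)ⁿ} φ < ∞, then for
every f ∈ L¹(ℝⁿ) and every y ∈ ℝⁿ, the Fourier transform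
(H_φ f)^(y) = ∫_{(0,∞)ⁿ} f̂(t₁y₁,…,tₙyₙ) φ(t) dt = H*_φ f̂ (y), where
ĝ(y) = ∫ g(x) e^{-2πi x·y} dx. -/
theorem fourier_hausdorff (n : ℕ) (φ : (Fin n → ℝ) → ℝ)
    (hφ : ∀ t ∈ {t : Fin n → ℝ | ∀ i, 0 < t i}, 0 ≤ φ t)
    (hloc : LocallyIntegrableOn φ {t : Fin n → ℝ | ∀ i, 0 < t i})
    (hint : IntegrableOn φ {t : Fin n → ℝ | ∀ i, 0 < t i})
    (f : (Fin n → ℝ) → ℂ) (hf : Integrable f) (y : Fin n → ℝ) :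
    (∫ x : Fin n → ℝ,
        Complex.exp (((-2 * π * ∑ i, x i * y i : ℝ) : ℂ) * Complex.I) *
          ∫ t in {t : Fin n → ℝ | ∀ i, 0 < t i},
            f (fun i => x i / t i) * ((φ t / ∏ i, t i : ℝ) : ℂ)) =
      ∫ t in {t : Fin n → ℝ | ∀ i, 0 < t i},
        (∫ x : Fin n → ℝ,
          Complex.exp (((-2 * π * ∑ i, x i * (t i * y i) : ℝ) : ℂ) * Complex.I) * f x) *
          ((φ t : ℝ) : ℂ) :=
  fourier_hausdorff_general n φ hint f hf y
end
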